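/- Let G be a subgroup of PL₊(I) generated by a finite set X. Then the set of all breakpoints of elements of G has only finitely many orbits under the action of G on [0,1], and the number of such orbits is at most the cardinality of the set of breakpoints of the elements of X. In fact, every breakpoint of an element of G lies in the same G-orbit as some breakpoint of some element of X. -/

import Mathlib

open Set

namespace PLPaper

/-- We model `PL₊(I)` inside the group of bijections of `ℝ` with *opposite*
composition, so that the group acts on `ℝ` on the right:
`x · (g * h) = (x · g) · h`. -/
abbrev PermR : Type := (Equiv.Perm ℝ)ᵐᵒᵖ

/-- The (right) action of `g` on the point `x`. -/
def ap (g : PermR) (x : ℝ) : ℝ := g.unop x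

/-- `g` is affine on a neighbourhood of `x`. -/
def IsLocallyAffineAt (g : PermR) (x : ℝ) : Prop :=
  ∃ m b : ℝ, ∀ᶠ y in nhds x, ap g y = m * y + b

/-- The breakpoints of `g`: points of `(0,1)` where `g` is not locally affine
(equivalently, for a PL map, where the derivative fails to exist). -/
def Breakpoints (g : PermR) : Set ℝ :=
  {x ∈ Ioo (0:ℝ) 1 | ¬ IsLocallyAffineAt g x}

/-- `g` is an orientation-preserving piecewise-linear homeomorphism of `[0,1]`
(extended by the identity to all of `ℝ`), with finitely many breakpoints. -/
def IsPL (g : PermR) : Prop :=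
  StrictMono (ap g) ∧ (∀ x ∉ Ioo (0:ℝ) 1, ap g x = x) ∧ (Breakpoints g).Finite

/-- The support of `g`. -/
def Supp (g : PermR) : Set ℝ := {x | ap g x ≠ x}

/-- `(a,b)` is an orbital of `g`, i.e. a connected component of `Supp g`. -/
def IsOrbital (g : PermR) (a b : ℝ) : Prop :=
  a < b ∧ Ioo a b ⊆ Supp g ∧ a ∉ Supp g ∧ b ∉ Supp g

/-- The support of a subgroup `G`. -/
def GSupp (G : Subgroup PermR) : Set ℝ := ⋃ g ∈ (G : Set PermR), Supp g

/-- `(a,b)` is an orbital of the group `G`, i.e. a connected component of its support. -/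
def IsGroupOrbital (G : Subgroup PermR) (a b : ℝ) : Prop :=
  a < b ∧ Ioo a b ⊆ GSupp G ∧ a ∉ GSupp G ∧ b ∉ GSupp G

/-- The pair `g, h` carries a transition chain: orbitals `(a,b)` of `g` and
`(c,d)` of `h` with `a < c < b < d`. -/
def ElemsTransitionChain (g h : PermR) : Prop :=
  ∃ a b c d : ℝ, IsOrbital g a b ∧ IsOrbital h c d ∧ a < c ∧ c < b ∧ b < d

/-- The pair `g, h` carries a one-sided overlap: orbitals `(a,b)` of `g` and
`(a,c)` of `h`, or `(a,b)` of `g` and `(c,b)` of `h`, where `a < c < b`. -/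
def ElemsOneSidedOverlap (g h : PermR) : Prop :=
  ∃ a b c : ℝ, a < c ∧ c < b ∧
    ((IsOrbital g a b ∧ IsOrbital h a c) ∨ (IsOrbital g a b ∧ IsOrbital h c b))

def AdmitsTransitionChain (G : Subgroup PermR) : Prop :=
  ∃ g ∈ G, ∃ h ∈ G, ElemsTransitionChain g h

def AdmitsOneSidedOverlap (G : Subgroup PermR) : Prop :=
  ∃ g ∈ G, ∃ h ∈ G, ElemsOneSidedOverlap g h

/-- `G` admits a bad overlap: orbitals `A` of `f ∈ G` and `B` of `g ∈ G` which
intersect, are distinct, and neither closure is contained in the other orbital. -/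
def AdmitsBadOverlap (G : Subgroup PermR) : Prop :=
  ∃ f ∈ G, ∃ g ∈ G, ∃ a b c d : ℝ, IsOrbital f a b ∧ IsOrbital g c d ∧
    (Ioo a b ∩ Ioo c d).Nonempty ∧ Ioo a b ≠ Ioo c d ∧
    ¬ Icc a b ⊆ Ioo c d ∧ ¬ Icc c d ⊆ Ioo a b

/-- A tower: a set of signed orbitals `((a,b), g)` with pairwise nested orbitals,
where equal orbitals force equal signatures. -/
def IsTower (T : Set ((ℝ × ℝ) × PermR)) : Prop :=
  (∀ p ∈ T, IsOrbital p.2 p.1.1 p.1.2) ∧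
  (∀ p ∈ T, ∀ q ∈ T,
      Ioo p.1.1 p.1.2 ⊆ Ioo q.1.1 q.1.2 ∨ Ioo q.1.1 q.1.2 ⊆ Ioo p.1.1 p.1.2) ∧
  (∀ p ∈ T, ∀ q ∈ T, p.1 = q.1 → p.2 = q.2)

/-- `G` admits the tower `T` if `T` is a tower all of whose signatures lie in `G`. -/
def AdmitsTower (G : Subgroup PermR) (T : Set ((ℝ × ℝ) × PermR)) : Prop :=
  IsTower T ∧ ∀ p ∈ T, p.2 ∈ G

def AdmitsInfiniteTower (G : Subgroup PermR) : Prop :=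
  ∃ T : Set ((ℝ × ℝ) × PermR), AdmitsTower G T ∧ T.Infinite

/-- The set of breakpoints of the elements of a set `S`. -/
def BreakSet (S : Set PermR) : Set ℝ := ⋃ g ∈ S, Breakpoints g

/-- The derived length of a group: the least `n` with `derivedSeries G n = ⊥`. -/
noncomputable def derivedLength (G : Type*) [Group G] : ℕ :=
  sInf {n : ℕ | derivedSeries G n = ⊥}

/-- The `G`-orbit of a point `x`. -/
def orbitOf (G : Subgroup PermR) (x : ℝ) : Set ℝ := {y | ∃ g ∈ G, ap g x = y}

/-!
A breakpoint of `g * h` at `x` is a breakpoint of `g` at `x` or of `h` at `x · g`, since a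
composite of maps that are affine near the relevant points is affine; likewise breakpoints of
`g⁻¹` are images of breakpoints of `g`. Induction on words in the generators therefore moves
every breakpoint of an element of `G` into a breakpoint of a generator by an element of `G`.
-/

open Filter Topology

@[simp]
lemma ap_mul (g h : PermR) (x : ℝ) : ap (g * h) x = ap h (ap g x) := rfl

@[simp]
lemma ap_one (x : ℝ) : ap 1 x = x := rfl

@[simp]
lemma ap_inv_ap (g : PermR) (x : ℝ) : ap g⁻¹ (ap g x) = x := by
  simp [ap]

@[simp]
lemma ap_ap_inv (g : PermR) (x : ℝ) : ap g (ap g⁻¹ x) = x := by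
  simp [ap]

lemma ap_injective (g : PermR) : Function.Injective (ap g) :=
  g.unop.injective

lemma ap_inv_eq_of_ap_eq {g : PermR} {x y : ℝ} (h : ap g y = x) : ap g⁻¹ x = y := by
  rw [← h, ap_inv_ap]

namespace IsLocallyAffineAt

lemma one (x : ℝ) : IsLocallyAffineAt 1 x :=
  ⟨1, 0, Eventually.of_forall fun y => by simp⟩

lemma continuousAt {g : PermR} {x : ℝ} (hg : IsLocallyAffineAt g x) :
    ContinuousAt (ap g) x := by
  obtain ⟨m, b, hg⟩ := hg
  exact (continuous_const.mul continuous_id |>.add continuous_const).continuousAt.congr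
    (hg.mono fun _ hy => hy.symm)

lemma mul {g h : PermR} {x : ℝ} (hg : IsLocallyAffineAt g x)
    (hh : IsLocallyAffineAt h (ap g x)) : IsLocallyAffineAt (g * h) x := by
  obtain ⟨m', b', hh⟩ := hh
  have hh := hg.continuousAt.eventually hh
  obtain ⟨m, b, hg⟩ := hg
  refine ⟨m' * m, m' * b + b', ?_⟩
  filter_upwards [hg, hh] with y hgy hhy
  rw [ap_mul, hhy, hgy]
  ring

lemma inv {g : PermR} {x : ℝ} (hg : IsLocallyAffineAt g x) :
    IsLocallyAffineAt g⁻¹ (ap g x) := by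
  obtain ⟨m, b, hg⟩ := hg
  have hgx : ap g x = m * x + b := hg.self_of_nhds
  have hm : m ≠ 0 := by
    obtain ⟨y, hgy, hyx⟩ :=
      ((hg.filter_mono nhdsWithin_le_nhds).and (self_mem_nhdsWithin (s := {x}ᶜ))).exists
    rintro rfl
    exact hyx (ap_injective g (by rw [hgy, hgx, zero_mul, zero_mul]))
  have hφ : Tendsto (fun w => (w - b) / m) (𝓝 (ap g x)) (𝓝 x) := by
    have := (by fun_prop : Continuous fun w : ℝ => (w - b) / m).tendsto (m * x + b)
    rwa [add_sub_cancel_right, mul_div_cancel_left₀ _ hm, ← hgx] at this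
  refine ⟨m⁻¹, -b / m, ?_⟩
  filter_upwards [hφ.eventually hg] with w hw
  rw [ap_inv_eq_of_ap_eq (by rw [hw, mul_div_cancel₀ _ hm, sub_add_cancel])]
  field_simp
  ring

end IsLocallyAffineAt

lemma IsPL.mapsTo_Ioo {g : PermR} (hg : IsPL g) :
    MapsTo (ap g) (Ioo (0 : ℝ) 1) (Ioo (0 : ℝ) 1) := by
  obtain ⟨hmono, hfix, -⟩ := hg
  intro x hx
  have h0 : ap g 0 = 0 := hfix 0 (by simp)
  have h1 : ap g 1 = 1 := hfix 1 (by simp)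
  exact ⟨h0 ▸ hmono hx.1, h1 ▸ hmono hx.2⟩

lemma mem_breakpoints_or_ap_mem_of_mem_breakpoints_mul {g h : PermR}
    (hg : MapsTo (ap g) (Ioo (0 : ℝ) 1) (Ioo (0 : ℝ) 1)) {x : ℝ}
    (hx : x ∈ Breakpoints (g * h)) : x ∈ Breakpoints g ∨ ap g x ∈ Breakpoints h := by
  refine or_iff_not_imp_left.2 fun hgx => ⟨hg hx.1, fun hh_aff => hx.2 ?_⟩
  have hg_aff : IsLocallyAffineAt g x := not_not.mp fun h => hgx ⟨hx.1, h⟩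
  exact hg_aff.mul hh_aff

lemma ap_inv_mem_breakpoints_of_mem_breakpoints_inv {g : PermR}
    (hg : MapsTo (ap g⁻¹) (Ioo (0 : ℝ) 1) (Ioo (0 : ℝ) 1)) {x : ℝ}
    (hx : x ∈ Breakpoints g⁻¹) : ap g⁻¹ x ∈ Breakpoints g := by
  refine ⟨hg hx.1, fun haff => hx.2 ?_⟩
  simpa using haff.inv

lemma exists_ap_eq_of_mem_breakpoints_of_mem_closure {X : Set PermR}
    (hX : ∀ g ∈ Subgroup.closure X, MapsTo (ap g) (Ioo (0 : ℝ) 1) (Ioo (0 : ℝ) 1))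
    {g : PermR} (hg : g ∈ Subgroup.closure X) :
    ∀ x ∈ Breakpoints g, ∃ y ∈ BreakSet X, ∃ k ∈ Subgroup.closure X, ap k y = x := by
  induction hg using Subgroup.closure_induction with
  | mem g hgX =>
    exact fun x hx => ⟨x, mem_biUnion hgX hx, 1, one_mem _, rfl⟩
  | one =>
    exact fun x hx => absurd (IsLocallyAffineAt.one x) hx.2
  | mul g h hg hh ihg ihh =>
    intro x hx
    rcases mem_breakpoints_or_ap_mem_of_mem_breakpoints_mul (hX g hg) hx with hgx | hhx
    · exact ihg x hgx
    · obtain ⟨y, hy, k, hk, hky⟩ := ihh _ hhx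
      exact ⟨y, hy, k * g⁻¹, mul_mem hk (inv_mem hg), by simp [hky]⟩
  | inv g hg ihg =>
    intro x hx
    obtain ⟨y, hy, k, hk, hky⟩ :=
      ihg _ (ap_inv_mem_breakpoints_of_mem_breakpoints_inv (hX _ (inv_mem hg)) hx)
    exact ⟨y, hy, k * g, mul_mem hk hg, by simp [hky]⟩

lemma orbitOf_eq_of_ap_eq {G : Subgroup PermR} {g : PermR} (hg : g ∈ G) {x y : ℝ}
    (hgy : ap g y = x) : orbitOf G x = orbitOf G y := by
  ext z
  constructor
  · rintro ⟨k, hk, rfl⟩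
    exact ⟨g * k, mul_mem hg hk, by simp [hgy]⟩
  · rintro ⟨k, hk, rfl⟩
    exact ⟨g⁻¹ * k, mul_mem (inv_mem hg) hk, by simp [← hgy]⟩

lemma image_orbitOf_subset {G : Subgroup PermR} {S T : Set ℝ}
    (h : ∀ x ∈ S, ∃ y ∈ T, ∃ g ∈ G, ap g y = x) : orbitOf G '' S ⊆ orbitOf G '' T := by
  rintro _ ⟨x, hx, rfl⟩
  obtain ⟨y, hy, g, hg, hgy⟩ := h x hx
  exact ⟨y, hy, (orbitOf_eq_of_ap_eq hg hgy).symm⟩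

lemma breakSet_finite {X : Set PermR} (hXfin : X.Finite) (hPL : ∀ g ∈ X, IsPL g) :
    (BreakSet X).Finite :=
  hXfin.biUnion fun g hg => (hPL g hg).2.2

theorem statement2 (X : Set PermR) (hXfin : X.Finite)
    (G : Subgroup PermR) (hG : G = Subgroup.closure X)
    (hPL : ∀ g ∈ G, IsPL g) :
    (∀ x ∈ BreakSet (G : Set PermR), ∃ y ∈ BreakSet X, ∃ g ∈ G, ap g y = x) ∧
    ((orbitOf G) '' BreakSet (G : Set PermR)).Finite ∧
    ((orbitOf G) '' BreakSet (G : Set PermR)).ncard ≤ (BreakSet X).ncard := by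
  have hBreak : ∀ x ∈ BreakSet (G : Set PermR), ∃ y ∈ BreakSet X, ∃ g ∈ G, ap g y = x := by
    intro x hx
    obtain ⟨g, hg, hgx⟩ := mem_iUnion₂.mp hx
    subst hG
    exact exists_ap_eq_of_mem_breakpoints_of_mem_closure
      (fun g hg => (hPL g hg).mapsTo_Ioo) hg x hgx
  have hBXfin : (BreakSet X).Finite :=
    breakSet_finite hXfin fun g hg => hPL g (hG ▸ Subgroup.subset_closure hg)
  have hsub := image_orbitOf_subset hBreak
  exact ⟨hBreak, (hBXfin.image _).subset hsub,
    (ncard_le_ncard hsub (hBXfin.image _)).trans (ncard_image_le hBXfin)⟩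

end PLPaper
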